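/- If F : F_2^n → F_2^n is an APN function, then there exists a Sidon set in F_2^{2n−1} of size 2^{n−1} + lin(F)/2. -/
import Mathlib

def IsSidon {G : Type*} [AddCommGroup G] (M : Set G) : Prop :=
  ∀ m₁ ∈ M, ∀ m₂ ∈ M, ∀ m₃ ∈ M, ∀ m₄ ∈ M,
    m₁ ≠ m₂ → m₁ ≠ m₃ → m₁ ≠ m₄ → m₂ ≠ m₃ → m₂ ≠ m₄ → m₃ ≠ m₄ →
      m₁ + m₂ + m₃ + m₄ ≠ 0

def IsAPN {n : ℕ} (F : (Fin n → ZMod 2) → (Fin n → ZMod 2)) : Prop :=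
  ∀ a : Fin n → ZMod 2, a ≠ 0 → ∀ b : Fin n → ZMod 2,
    (Finset.univ.filter (fun x => F x + F (x + a) = b)).card ≤ 2

def dot {t : ℕ} (a b : Fin t → ZMod 2) : ZMod 2 := ∑ i, a i * b i

noncomputable def walshF {n : ℕ} (F : (Fin n → ZMod 2) → (Fin n → ZMod 2))
    (a b : Fin n → ZMod 2) : ℤ :=
  ∑ x : Fin n → ZMod 2, (-1 : ℤ) ^ (dot a x + dot b (F x)).val

noncomputable def linF {n : ℕ} (F : (Fin n → ZMod 2) → (Fin n → ZMod 2)) : ℕ :=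
  Finset.sup (Finset.univ.filter
      (fun p : (Fin n → ZMod 2) × (Fin n → ZMod 2) => p.2 ≠ 0))
    (fun p => (walshF F p.1 p.2).natAbs)

lemma dot_add {t : ℕ} (a x y : Fin t → ZMod 2) : dot a (x + y) = dot a x + dot a y := by
  simp [dot, mul_add, Finset.sum_add_distrib]

lemma dot_zero {t : ℕ} (a : Fin t → ZMod 2) : dot a 0 = 0 := by simp [dot]

lemma dot_eq_single {n : ℕ} (b v : Fin n → ZMod 2) (i : Fin n) (hb : b i = 1)
    (hv : ∀ j, j ≠ i → v j = 0) : dot b v = v i := by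
  unfold dot
  rw [Finset.sum_eq_single i]
  · rw [hb, one_mul]
  · intro j _ hj; rw [hv j hj, mul_zero]
  · intro h; simp at h

def emb2 {n : ℕ} (i : Fin n) (m : Fin (n-1)) : Fin n :=
  if (m:ℕ) < (i:ℕ) then ⟨m, by have := m.isLt; omega⟩
  else ⟨(m:ℕ)+1, by have := m.isLt; omega⟩

lemma emb2_surj {n : ℕ} (i j : Fin n) (hj : j ≠ i) : ∃ m, emb2 i m = j := by
  have hji := Fin.val_ne_of_ne hj
  have hi := i.isLt
  have hjn := j.isLt
  by_cases hc : (j:ℕ) < (i:ℕ)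
  · exact ⟨⟨j, by omega⟩, by simp [emb2, hc, Fin.ext_iff]⟩
  · refine ⟨⟨(j:ℕ)-1, by omega⟩, ?_⟩
    unfold emb2
    rw [if_neg (by simp; omega)]
    simp [Fin.ext_iff]; omega

def proj2 {n : ℕ} (i : Fin n) (u v : Fin n → ZMod 2) (k : Fin (2*n-1)) : ZMod 2 :=
  if h : (k:ℕ) < n then u ⟨k, h⟩ else v (emb2 i ⟨(k:ℕ) - n, by have := k.isLt; omega⟩)

lemma proj2_add {n : ℕ} (i : Fin n) (u v u' v' : Fin n → ZMod 2) :
    proj2 i (u+u') (v+v') = proj2 i u v + proj2 i u' v' := by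
  funext k; unfold proj2
  by_cases h : (k:ℕ) < n <;> simp [h]

lemma proj2_fst {n : ℕ} (i : Fin n) (u v : Fin n → ZMod 2) (j : Fin n) (hj : (j:ℕ) < 2*n-1) :
    proj2 i u v ⟨j, hj⟩ = u j := by
  unfold proj2
  rw [dif_pos (by simpa using j.isLt)]

lemma proj2_snd {n : ℕ} (i : Fin n) (u v : Fin n → ZMod 2) (m : Fin (n-1)) (hm : n + (m:ℕ) < 2*n-1) :
    proj2 i u v ⟨n + (m:ℕ), hm⟩ = v (emb2 i m) := by
  unfold proj2
  rw [dif_neg (by simp)]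
  congr 1
  · ext; simp

lemma proj2_eq_zero {n : ℕ} (i : Fin n) (u v : Fin n → ZMod 2) (h : proj2 i u v = 0) :
    u = 0 ∧ ∀ j, j ≠ i → v j = 0 := by
  have hn : 1 ≤ n := by have := i.isLt; omega
  constructor
  · funext j
    have hj : (j:ℕ) < 2*n-1 := by have := j.isLt; omega
    have := congrFun h ⟨j, hj⟩
    rwa [proj2_fst] at this
  · intro j hj
    obtain ⟨m, hm⟩ := emb2_surj i j hj
    have hmlt : n + (m:ℕ) < 2*n-1 := by have := m.isLt; omega
    have := congrFun h ⟨n + (m:ℕ), hmlt⟩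
    rw [proj2_snd] at this
    rwa [hm] at this

lemma two_eq_zero {n : ℕ} (x : Fin n → ZMod 2) : x + x = 0 := by
  funext j
  have : ∀ w : ZMod 2, w + w = 0 := by decide
  exact this (x j)

lemma add_eq_zero_iff2 {n : ℕ} {x y : Fin n → ZMod 2} (h : x + y = 0) : x = y := by
  have := two_eq_zero y
  linear_combination h - this

lemma sidon_aux {n : ℕ} (hn : 1 ≤ n) (F : (Fin n → ZMod 2) → (Fin n → ZMod 2))
    (hF : IsAPN F) (a b : Fin n → ZMod 2) (hb : b ≠ 0) (ε : ZMod 2) :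
    ∃ N : Finset (Fin (2*n-1) → ZMod 2), IsSidon (N : Set (Fin (2*n-1) → ZMod 2)) ∧
      N.card = (Finset.univ.filter (fun x => dot a x + dot b (F x) = ε)).card := by
  classical
  obtain ⟨i, hi⟩ : ∃ i, b i ≠ 0 := by
    by_contra hcon; push_neg at hcon
    exact hb (funext fun j => hcon j)
  have hbi : b i = 1 := by
    revert hi; generalize b i = z; revert z; decide
  set S := Finset.univ.filter (fun x => dot a x + dot b (F x) = ε) with hS
  set Φ : (Fin n → ZMod 2) → (Fin (2*n-1) → ZMod 2) := fun x => proj2 i x (F x) with hΦ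
  have hinj : Function.Injective Φ := by
    intro x y h
    funext j
    have hj : (j:ℕ) < 2*n-1 := by have := j.isLt; omega
    have h2 : proj2 i x (F x) ⟨j, hj⟩ = proj2 i y (F y) ⟨j, hj⟩ := congrFun h ⟨j, hj⟩
    rwa [proj2_fst, proj2_fst] at h2
  refine ⟨S.image Φ, ?_, Finset.card_image_of_injective S hinj⟩
  intro m1 hm1 m2 hm2 m3 hm3 m4 hm4 h12 h13 h14 h23 h24 h34 hsum
  simp only [Finset.coe_image, Set.mem_image, Finset.mem_coe] at hm1 hm2 hm3 hm4
  obtain ⟨x1, hx1S, hx1⟩ := hm1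
  obtain ⟨x2, hx2S, hx2⟩ := hm2
  obtain ⟨x3, hx3S, hx3⟩ := hm3
  obtain ⟨x4, hx4S, hx4⟩ := hm4
  have hf1 : dot a x1 + dot b (F x1) = ε := (Finset.mem_filter.mp hx1S).2
  have hf2 : dot a x2 + dot b (F x2) = ε := (Finset.mem_filter.mp hx2S).2
  have hf3 : dot a x3 + dot b (F x3) = ε := (Finset.mem_filter.mp hx3S).2
  have hf4 : dot a x4 + dot b (F x4) = ε := (Finset.mem_filter.mp hx4S).2
  have d12 : x1 ≠ x2 := fun h => h12 (by rw [← hx1, ← hx2, h])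
  have d13 : x1 ≠ x3 := fun h => h13 (by rw [← hx1, ← hx3, h])
  have d23 : x2 ≠ x3 := fun h => h23 (by rw [← hx2, ← hx3, h])
  -- sum of images is zero
  have hπ : proj2 i (x1+x2+x3+x4) (F x1 + F x2 + F x3 + F x4) = 0 := by
    have h0 : Φ x1 + Φ x2 + Φ x3 + Φ x4 = 0 := by rw [hx1, hx2, hx3, hx4]; exact hsum
    rw [hΦ] at h0
    simp only at h0
    rwa [← proj2_add, ← proj2_add, ← proj2_add] at h0
  obtain ⟨hu0, hvoff⟩ := proj2_eq_zero i _ _ hπ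
  -- derive v = 0
  set v := F x1 + F x2 + F x3 + F x4 with hv
  have hdotsum : dot a (x1+x2+x3+x4) + dot b v = 0 := by
    have h2 : ∀ z : ZMod 2, z + z = 0 := by decide
    simp only [hv, dot_add]
    linear_combination hf1 + hf2 + hf3 + hf4 + 2 * h2 ε
  rw [hu0, dot_zero, zero_add, dot_eq_single b v i hbi hvoff] at hdotsum
  have hv0 : v = 0 := by
    funext j
    by_cases hj : j = i
    · rw [hj]; exact hdotsum
    · exact hvoff j hj
  -- APN contradiction
  set a' := x1 + x2 with ha'
  have ha'0 : a' ≠ 0 := fun h => d12 (add_eq_zero_iff2 h)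
  set b' := F x1 + F x2 with hb'
  set T := Finset.univ.filter (fun x => F x + F (x + a') = b') with hT
  have hTx1 : x1 ∈ T := by
    rw [hT, Finset.mem_filter]
    refine ⟨Finset.mem_univ _, ?_⟩
    have hx : x1 + a' = x2 := by
      rw [ha']; linear_combination two_eq_zero x1
    rw [hx, hb']
  have hTx2 : x2 ∈ T := by
    rw [hT, Finset.mem_filter]
    refine ⟨Finset.mem_univ _, ?_⟩
    have hx : x2 + a' = x1 := by
      rw [ha']; linear_combination two_eq_zero x2
    rw [hx, hb']
    ring
  have hTx3 : x3 ∈ T := by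
    rw [hT, Finset.mem_filter]
    refine ⟨Finset.mem_univ _, ?_⟩
    have hx : x3 + a' = x4 := by
      linear_combination hu0 - two_eq_zero x4
    rw [hx, hb']
    have hv0' := hv0
    rw [hv] at hv0'
    linear_combination hv0' - two_eq_zero b'
  have hcard : ({x1, x2, x3} : Finset (Fin n → ZMod 2)).card = 3 := by
    rw [Finset.card_insert_of_notMem (by simp [d12, d13]),
        Finset.card_insert_of_notMem (by simp [d23]), Finset.card_singleton]
  have hsub : ({x1, x2, x3} : Finset (Fin n → ZMod 2)) ⊆ T := by
    intro z hz
    simp only [Finset.mem_insert, Finset.mem_singleton] at hz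
    rcases hz with h | h | h <;> subst h <;> assumption
  have hle := Finset.card_le_card hsub
  have h2 := hF a' ha'0 b'
  rw [← hT] at h2
  omega

lemma walsh_eq {n : ℕ} (F : (Fin n → ZMod 2) → (Fin n → ZMod 2)) (a b : Fin n → ZMod 2) :
    walshF F a b = ((Finset.univ.filter (fun x => dot a x + dot b (F x) = 0)).card : ℤ)
      - ((Finset.univ.filter (fun x => dot a x + dot b (F x) = 1)).card : ℤ) := by
  classical
  unfold walshF
  rw [← Finset.sum_filter_add_sum_filter_not Finset.univ
    (fun x => dot a x + dot b (F x) = 0)]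
  have h1 : ∀ x ∈ Finset.univ.filter (fun x => dot a x + dot b (F x) = 0),
      (-1 : ℤ) ^ (dot a x + dot b (F x)).val = 1 := by
    intro x hx
    rw [(Finset.mem_filter.mp hx).2]
    rfl
  have hfe : Finset.univ.filter (fun x => ¬(dot a x + dot b (F x) = 0))
      = Finset.univ.filter (fun x => dot a x + dot b (F x) = 1) := by
    apply Finset.filter_congr
    intro x _
    have : ∀ z : ZMod 2, ¬(z = 0) ↔ z = 1 := by decide
    exact this _
  have h2 : ∀ x ∈ Finset.univ.filter (fun x => dot a x + dot b (F x) = 1),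
      (-1 : ℤ) ^ (dot a x + dot b (F x)).val = -1 := by
    intro x hx
    rw [(Finset.mem_filter.mp hx).2]
    rfl
  rw [Finset.sum_congr rfl h1, hfe, Finset.sum_congr rfl h2]
  simp [mul_comm]
  ring

lemma count_sum {n : ℕ} (F : (Fin n → ZMod 2) → (Fin n → ZMod 2)) (a b : Fin n → ZMod 2) :
    (Finset.univ.filter (fun x => dot a x + dot b (F x) = 0)).card
      + (Finset.univ.filter (fun x => dot a x + dot b (F x) = 1)).card = 2 ^ n := by
  classical
  have hfe : Finset.univ.filter (fun x => ¬(dot a x + dot b (F x) = 0))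
      = Finset.univ.filter (fun x => dot a x + dot b (F x) = 1) := by
    apply Finset.filter_congr
    intro x _
    have : ∀ z : ZMod 2, ¬(z = 0) ↔ z = 1 := by decide
    exact this _
  rw [← hfe, Finset.card_filter_add_card_filter_not]
  simp [ZMod.card]

theorem stmt_12 {n : ℕ} (hn : 1 ≤ n) (F : (Fin n → ZMod 2) → (Fin n → ZMod 2))
    (hF : IsAPN F) :
    ∃ N : Finset (Fin (2 * n - 1) → ZMod 2),
      IsSidon (N : Set (Fin (2 * n - 1) → ZMod 2)) ∧ 2 * N.card = 2 ^ n + linF F := by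
  classical
  have hne : (Finset.univ.filter
      (fun p : (Fin n → ZMod 2) × (Fin n → ZMod 2) => p.2 ≠ 0)).Nonempty := by
    refine ⟨(0, fun _ => 1), ?_⟩
    simp only [Finset.mem_filter, Finset.mem_univ, true_and]
    intro h
    have := congrFun h ⟨0, hn⟩
    simp at this
  obtain ⟨p, hp, hlin⟩ := Finset.exists_mem_eq_sup _ hne
    (fun p : (Fin n → ZMod 2) × (Fin n → ZMod 2) => (walshF F p.1 p.2).natAbs)
  have hb : p.2 ≠ 0 := (Finset.mem_filter.mp hp).2
  have hlin' : linF F = (walshF F p.1 p.2).natAbs := hlin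
  have hWAB := walsh_eq F p.1 p.2
  have hABsum := count_sum F p.1 p.2
  set A := (Finset.univ.filter (fun x => dot p.1 x + dot p.2 (F x) = 0)).card with hA
  set B := (Finset.univ.filter (fun x => dot p.1 x + dot p.2 (F x) = 1)).card with hB
  by_cases hW : 0 ≤ walshF F p.1 p.2
  · obtain ⟨N, hNs, hNc⟩ := sidon_aux hn F hF p.1 p.2 hb 0
    refine ⟨N, hNs, ?_⟩
    rw [hNc, ← hA, hlin']
    have key : 2 * A = (A + B) + (walshF F p.1 p.2).natAbs := by omega
    rw [key, hABsum]
  · obtain ⟨N, hNs, hNc⟩ := sidon_aux hn F hF p.1 p.2 hb 1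
    refine ⟨N, hNs, ?_⟩
    rw [hNc, ← hB, hlin']
    have key : 2 * B = (A + B) + (walshF F p.1 p.2).natAbs := by omega
    rw [key, hABsum]
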